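/- arXiv:2110.01343 — 3 statements merged into one kernel-verified Lean document; each statement's English description precedes it below -/
import Mathlib

section
/- Let $(\mathcal E,\|\cdot\|)$ be a normed vector space, $s_{-1}\in[0,1]$, and let $Y:(0,1]\to\mathcal E$ satisfy $\|Y_t-Y_s\|\le \sum_{i=1}^h C_i s^{-\eta_i}(t-s)^{\tau_i}$ for all $s_{-1}\le s\le t\le 1$ with $s\neq 0$, where $C_i\ge 0$, $\eta_i,\tau_i\in[0,1]$ and $\tau_i-\eta_i>0$ for each $i$. Then $\|Y_t-Y_s\|\le \sum_{i=1}^h (1-2^{\eta_i-\tau_i})^{-1} C_i (t-s)^{\tau_i-\eta_i}$ for all $s_{-1}\le s\le t\le 1$ with $s\neq 0$. -/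
open Finset Filter

private lemma half_pow_rpow (n : ℕ) (z : ℝ) :
    ((2⁻¹ : ℝ) ^ n) ^ z = ((2:ℝ) ^ (-z)) ^ n := by
  rw [← Real.rpow_natCast (2⁻¹:ℝ) n, ← Real.rpow_natCast ((2:ℝ)^(-z)) n,
    ← Real.rpow_mul (by norm_num), ← Real.rpow_mul (by norm_num),
    Real.inv_rpow (by norm_num), ← Real.rpow_neg (by norm_num)]
  ring_nf

private lemma geom_partial_le {r : ℝ} (h0 : 0 ≤ r) (h1 : r < 1) (N : ℕ) :
    ∑ n ∈ Finset.range N, r ^ n ≤ (1 - r)⁻¹ := by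
  have := Summable.sum_le_tsum (Finset.range N) (fun n _ => pow_nonneg h0 n)
    (summable_geometric_of_lt_one h0 h1)
  rwa [tsum_geometric_of_lt_one h0 h1] at this

/-- If `Y : (0,1] → E` satisfies
`‖Y_t - Y_s‖ ≤ ∑ i, C i * s^(-η i) * (t-s)^(τ i)` for `sm1 ≤ s ≤ t ≤ 1`, `s ≠ 0`,
with `C i ≥ 0`, `η i, τ i ∈ [0,1]` and `τ i - η i > 0`, then
`‖Y_t - Y_s‖ ≤ ∑ i, (1 - 2^(η i - τ i))⁻¹ * C i * (t-s)^(τ i - η i)`. -/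
theorem singular_holder_improvement {E : Type*} [NormedAddCommGroup E] [NormedSpace ℝ E]
    (h : ℕ) (Y : ℝ → E) (sm1 : ℝ) (hs : sm1 ∈ Set.Icc (0:ℝ) 1)
    (C η τ : Fin h → ℝ)
    (hC : ∀ i, 0 ≤ C i) (hη : ∀ i, η i ∈ Set.Icc (0:ℝ) 1)
    (hτ : ∀ i, τ i ∈ Set.Icc (0:ℝ) 1) (hτη : ∀ i, 0 < τ i - η i)
    (hY : ∀ s t : ℝ, sm1 ≤ s → s ≤ t → t ≤ 1 → s ≠ 0 →
      ‖Y t - Y s‖ ≤ ∑ i, C i * s ^ (-(η i)) * (t - s) ^ (τ i)) :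
    ∀ s t : ℝ, sm1 ≤ s → s ≤ t → t ≤ 1 → s ≠ 0 →
      ‖Y t - Y s‖ ≤ ∑ i, (1 - (2:ℝ) ^ (η i - τ i))⁻¹ * C i * (t - s) ^ (τ i - η i) := by
  intro s t hsm hst ht1 hs0
  have hs' : 0 < s := lt_of_le_of_ne (hs.1.trans hsm) (Ne.symm hs0)
  -- basic facts about r i := 2 ^ (η i - τ i)
  set r : Fin h → ℝ := fun i => (2:ℝ) ^ (η i - τ i) with hr
  have hr0 : ∀ i, 0 < r i := fun i => Real.rpow_pos_of_pos (by norm_num) _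
  have hr1 : ∀ i, r i < 1 := fun i =>
    Real.rpow_lt_one_of_one_lt_of_neg (by norm_num) (by linarith [hτη i])
  have hrinv : ∀ i, 0 < (1 - r i)⁻¹ := fun i =>
    inv_pos.mpr (by linarith [hr1 i])
  rcases eq_or_lt_of_le hst with rfl | hlt
  · simp only [sub_self, norm_zero]
    refine Finset.sum_nonneg fun i _ => ?_
    have := Real.rpow_nonneg (le_refl (0:ℝ)) (τ i - η i)
    exact mul_nonneg (mul_nonneg (hrinv i).le (hC i)) this
  set d := t - s with hd
  have hd0 : 0 < d := by simp [hd]; linarith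
  -- dyadic points
  set p : ℕ → ℝ := fun N => s + d * (2⁻¹:ℝ) ^ N with hp
  have hp_ge : ∀ N, s ≤ p N := fun N => by
    have : (0:ℝ) ≤ d * (2⁻¹:ℝ) ^ N := by positivity
    simp [hp]; linarith
  have hp_pos : ∀ N, 0 < p N := fun N => lt_of_lt_of_le hs' (hp_ge N)
  have hp_le : ∀ N, p N ≤ t := fun N => by
    have h1 : d * (2⁻¹:ℝ) ^ N ≤ d * 1 := by
      apply mul_le_mul_of_nonneg_left _ hd0.le
      exact pow_le_one₀ (by norm_num) (by norm_num)
    simp only [hp]; simp [hd] at h1 ⊢; linarith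
  have hp_mono : ∀ N, p (N+1) ≤ p N := fun N => by
    have : (2⁻¹:ℝ) ^ (N+1) ≤ (2⁻¹:ℝ) ^ N :=
      pow_le_pow_of_le_one (by norm_num) (by norm_num) (Nat.le_succ N)
    simp only [hp]
    nlinarith
  have hp_diff : ∀ N, p N - p (N+1) = d * (2⁻¹:ℝ) ^ (N+1) := fun N => by
    simp only [hp, pow_succ]; ring
  have hp_lb : ∀ N, d * (2⁻¹:ℝ) ^ N ≤ p N := fun N => by
    have := hs'.le; simp only [hp]; linarith
  have hp0 : p 0 = t := by simp [hp, hd]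
  -- increment bound
  have hinc : ∀ N, ‖Y (p N) - Y (p (N+1))‖ ≤
      ∑ i, C i * d ^ (τ i - η i) * r i ^ (N+1) := by
    intro N
    have hb := hY (p (N+1)) (p N) (hsm.trans (hp_ge _)) (hp_mono N)
      ((hp_le N).trans ht1) (ne_of_gt (hp_pos _))
    refine hb.trans (Finset.sum_le_sum fun i _ => ?_)
    set a : ℝ := d * (2⁻¹:ℝ) ^ (N+1) with ha
    have ha0 : 0 < a := by positivity
    have h1 : (p (N+1)) ^ (-(η i)) ≤ a ^ (-(η i)) :=
      Real.rpow_le_rpow_of_nonpos ha0 (hp_lb (N+1)) (neg_nonpos.mpr (hη i).1)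
    have h2 : (p N - p (N+1)) ^ (τ i) = a ^ (τ i) := by rw [hp_diff N]
    have h3 : C i * (p (N+1)) ^ (-(η i)) * (p N - p (N+1)) ^ (τ i) ≤
        C i * a ^ (-(η i)) * a ^ (τ i) := by
      rw [h2]
      exact mul_le_mul_of_nonneg_right (mul_le_mul_of_nonneg_left h1 (hC i))
        (Real.rpow_nonneg ha0.le _)
    refine h3.trans (le_of_eq ?_)
    rw [mul_assoc, ← Real.rpow_add ha0, ha,
      Real.mul_rpow hd0.le (by positivity), half_pow_rpow, hr]
    have : -η i + τ i = τ i - η i := by ring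
    rw [this, neg_sub]
    ring
  -- telescoping
  have key : ∀ N, ‖Y t - Y (p N)‖ ≤
      ∑ n ∈ Finset.range N, ∑ i, C i * d ^ (τ i - η i) * r i ^ (n+1) := by
    intro N
    induction N with
    | zero => simp [hp0]
    | succ N ih =>
      have tri : ‖Y t - Y (p (N+1))‖ ≤ ‖Y t - Y (p N)‖ + ‖Y (p N) - Y (p (N+1))‖ := by
        have : Y t - Y (p (N+1)) = (Y t - Y (p N)) + (Y (p N) - Y (p (N+1))) := by abel
        rw [this]; exact norm_add_le _ _
      rw [Finset.sum_range_succ]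
      exact tri.trans (add_le_add ih (hinc N))
  -- main bound with tail
  have main : ∀ N, ‖Y t - Y s‖ ≤
      (∑ i, (1 - r i)⁻¹ * C i * d ^ (τ i - η i)) +
      ∑ i, (C i * s ^ (-(η i)) * d ^ (τ i)) * ((2:ℝ) ^ (-(τ i))) ^ N := by
    intro N
    have tri : ‖Y t - Y s‖ ≤ ‖Y t - Y (p N)‖ + ‖Y (p N) - Y s‖ := by
      have : Y t - Y s = (Y t - Y (p N)) + (Y (p N) - Y s) := by abel
      rw [this]; exact norm_add_le _ _
    refine tri.trans (add_le_add ?_ ?_)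
    · refine (key N).trans ?_
      rw [Finset.sum_comm]
      refine Finset.sum_le_sum fun i _ => ?_
      have e1 : ∑ n ∈ Finset.range N, C i * d ^ (τ i - η i) * r i ^ (n+1)
          = C i * d ^ (τ i - η i) * ∑ n ∈ Finset.range N, r i ^ (n+1) := by
        rw [Finset.mul_sum]
      rw [e1]
      have h4 : ∑ n ∈ Finset.range N, r i ^ (n+1) ≤ (1 - r i)⁻¹ := by
        refine le_trans (Finset.sum_le_sum fun n _ => ?_) (geom_partial_le (hr0 i).le (hr1 i) N)
        calc r i ^ (n+1) = r i ^ n * r i := by rw [pow_succ]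
        _ ≤ r i ^ n * 1 := by
            exact mul_le_mul_of_nonneg_left (hr1 i).le (pow_nonneg (hr0 i).le n)
        _ = r i ^ n := mul_one _
      calc C i * d ^ (τ i - η i) * ∑ n ∈ Finset.range N, r i ^ (n+1)
          ≤ C i * d ^ (τ i - η i) * (1 - r i)⁻¹ := by
            exact mul_le_mul_of_nonneg_left h4
              (mul_nonneg (hC i) (Real.rpow_nonneg hd0.le _))
        _ = (1 - r i)⁻¹ * C i * d ^ (τ i - η i) := by ring
    · have hb := hY s (p N) hsm (hp_ge N) ((hp_le N).trans ht1) hs0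
      refine hb.trans (le_of_eq (Finset.sum_congr rfl fun i _ => ?_))
      have : p N - s = d * (2⁻¹:ℝ) ^ N := by simp [hp]
      rw [this, Real.mul_rpow hd0.le (by positivity), half_pow_rpow]
      ring
  -- take limit
  have htail : Tendsto (fun N : ℕ =>
      (∑ i, (1 - r i)⁻¹ * C i * d ^ (τ i - η i)) +
      ∑ i, (C i * s ^ (-(η i)) * d ^ (τ i)) * ((2:ℝ) ^ (-(τ i))) ^ N) atTop
      (nhds ((∑ i, (1 - r i)⁻¹ * C i * d ^ (τ i - η i)) + 0)) := by
    refine Tendsto.const_add _ ?_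
    have : Tendsto (fun N : ℕ => ∑ i, (C i * s ^ (-(η i)) * d ^ (τ i)) * ((2:ℝ) ^ (-(τ i))) ^ N)
        atTop (nhds (∑ i : Fin h, (0:ℝ))) := by
      refine tendsto_finset_sum _ fun i _ => ?_
      have hq0 : (0:ℝ) ≤ (2:ℝ) ^ (-(τ i)) := (Real.rpow_pos_of_pos (by norm_num) _).le
      have hq1 : (2:ℝ) ^ (-(τ i)) < 1 :=
        Real.rpow_lt_one_of_one_lt_of_neg (by norm_num)
          (by have := hτη i; have := (hη i).1; linarith)
      have := (tendsto_pow_atTop_nhds_zero_of_lt_one hq0 hq1).const_mul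
        (C i * s ^ (-(η i)) * d ^ (τ i))
      simpa using this
    simpa using this
  rw [add_zero] at htail
  exact le_of_tendsto_of_tendsto' tendsto_const_nhds htail main
end

section
/- Fix $\varepsilon>0$, $s\in D_n$ and $r>s$. Then $\int_s^r (r-k_n(\theta))^{-1-\varepsilon}\,d\theta\le N_\varepsilon\,[\min(r-s,1/n)]^{-\varepsilon}+\mathbf 1_{(r\notin D_n)}(r-k_n(r))^{-\varepsilon}$, where $N_\varepsilon$ depends only on $\varepsilon$. -/
open MeasureTheory


lemma intkn_cell (ε : ℝ) (n : ℕ) (hn : 0 < n) (r a b : ℝ) (j : ℕ)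
    (ha : (j:ℝ)/n ≤ a) (hab : a ≤ b) (hb : b ≤ ((j:ℝ)+1)/n) :
    IntervalIntegrable (fun θ => (r - (⌊(n:ℝ)*θ⌋:ℝ)/n) ^ (-1-ε)) volume a b ∧
    ∫ θ in a..b, (r - (⌊(n:ℝ)*θ⌋:ℝ)/n) ^ (-1-ε) = (b - a) * (r - (j:ℝ)/n) ^ (-1-ε) := by
  have hn' : (0:ℝ) < n := by exact_mod_cast hn
  have hne : ∀ᵐ θ ∂(volume : Measure ℝ), θ ≠ ((j:ℝ)+1)/n := by
    have : (volume ({((j:ℝ)+1)/n} : Set ℝ)) = 0 := measure_singleton _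
    filter_upwards [measure_eq_zero_iff_ae_notMem.mp this] with θ hθ
    simpa using hθ
  have key : (fun θ => (r - (⌊(n:ℝ)*θ⌋:ℝ)/n) ^ (-1-ε))
      =ᵐ[volume.restrict (Set.Ioc a b)] (fun _ => (r - (j:ℝ)/n) ^ (-1-ε)) := by
    filter_upwards [ae_restrict_of_ae hne, ae_restrict_mem measurableSet_Ioc] with θ h1 h2
    have hθ1 : (j:ℝ)/n < θ := lt_of_le_of_lt ha h2.1
    have hθ2 : θ < ((j:ℝ)+1)/n := lt_of_le_of_ne (le_trans h2.2 hb) h1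
    have hfl : ⌊(n:ℝ)*θ⌋ = (j:ℤ) := by
      rw [Int.floor_eq_iff]
      constructor
      · push_cast
        rw [div_lt_iff₀ hn'] at hθ1; linarith
      · push_cast
        rw [lt_div_iff₀ hn'] at hθ2; linarith
    rw [hfl]; push_cast; ring_nf
  constructor
  · rw [intervalIntegrable_iff_integrableOn_Ioc_of_le hab]
    exact ((integrableOn_const_iff).mpr (Or.inr measure_Ioc_lt_top)).congr key.symm
  · rw [intervalIntegral.integral_of_le hab, integral_congr_ae key]
    rw [setIntegral_const, Measure.real, Real.volume_Ioc, smul_eq_mul]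
    rw [ENNReal.toReal_ofReal (by linarith)]

lemma intkn_formula (ε : ℝ) (n : ℕ) (hn : 0 < n) (r : ℝ) :
    ∀ d i : ℕ, ((i:ℝ)+(d:ℝ))/n ≤ r → r ≤ ((i:ℝ)+(d:ℝ)+1)/n →
    IntervalIntegrable (fun θ => (r - (⌊(n:ℝ)*θ⌋:ℝ)/n) ^ (-1-ε)) volume ((i:ℝ)/n) r ∧
    ∫ θ in ((i:ℝ)/n)..r, (r - (⌊(n:ℝ)*θ⌋:ℝ)/n) ^ (-1-ε)
      = (∑ k ∈ Finset.range d, (1/(n:ℝ)) * (r - ((i:ℝ)+(k:ℝ))/n) ^ (-1-ε))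
        + (r - ((i:ℝ)+(d:ℝ))/n) * (r - ((i:ℝ)+(d:ℝ))/n) ^ (-1-ε) := by
  have hn' : (0:ℝ) < n := by exact_mod_cast hn
  intro d
  induction d with
  | zero =>
    intro i h1 h2
    simp only [Nat.cast_zero, add_zero] at h1 h2 ⊢
    have := intkn_cell ε n hn r ((i:ℝ)/n) r i le_rfl h1 h2
    simpa using this
  | succ d ih =>
    intro i h1 h2
    have hd : (0:ℝ) ≤ (d:ℝ) := Nat.cast_nonneg d
    have h1' : ((i:ℝ)+1)/n ≤ r := by
      refine le_trans ?_ h1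
      apply div_le_div_of_nonneg_right ?_ hn'.le |>.trans le_rfl
      push_cast; linarith
    have hcell := intkn_cell ε n hn r ((i:ℝ)/n) (((i:ℝ)+1)/n) i le_rfl
      (by apply div_le_div_of_nonneg_right ?_ hn'.le; linarith) le_rfl
    have hih := ih (i+1) (by push_cast; push_cast at h1; convert h1 using 2; ring)
      (by push_cast; push_cast at h2; convert h2 using 2; ring)
    constructor
    · exact hcell.1.trans (by convert hih.1 using 2; push_cast; ring)
    · have hih1 : IntervalIntegrable (fun θ => (r - (⌊(n:ℝ)*θ⌋:ℝ)/n) ^ (-1-ε)) volume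
        (((i:ℝ)+1)/n) r := by convert hih.1 using 2; push_cast; ring
      rw [← intervalIntegral.integral_add_adjacent_intervals hcell.1 hih1]
      have e2 : ∫ θ in (((i:ℝ)+1)/n)..r, (r - (⌊(n:ℝ)*θ⌋:ℝ)/n) ^ (-1-ε)
          = (∑ k ∈ Finset.range d, (1/(n:ℝ)) * (r - (((i:ℝ)+1)+(k:ℝ))/n) ^ (-1-ε))
            + (r - (((i:ℝ)+1)+(d:ℝ))/n) * (r - (((i:ℝ)+1)+(d:ℝ))/n) ^ (-1-ε) := by
        have := hih.2
        push_cast at this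
        convert this using 3 <;> push_cast <;> ring_nf
      rw [hcell.2, e2, Finset.sum_range_succ']
      have hds : ∀ k ∈ Finset.range d,
          (1/(n:ℝ)) * (r - ((i:ℝ)+((k:ℝ)+1))/n) ^ (-1-ε)
          = (1/(n:ℝ)) * (r - (((i:ℝ)+1)+(k:ℝ))/n) ^ (-1-ε) := by
        intro k _; ring_nf
      push_cast
      rw [Finset.sum_congr rfl hds]
      have e3 : ((i:ℝ) + ((d:ℝ) + 1)) = 1 + (i:ℝ) + (d:ℝ) := by ring
      have e4 : ((i:ℝ) + 1 + (d:ℝ)) = 1 + (i:ℝ) + (d:ℝ) := by ring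
      have e5 : ((i:ℝ) + 0) = (i:ℝ) := by ring
      have e6 : (((i:ℝ)+1)/(n:ℝ) - (i:ℝ)/(n:ℝ)) = 1/(n:ℝ) := by field_simp; ring
      rw [e3, e4, e5, e6]
      ring

open Classical in
/-- For `ε > 0`, `s = i/n ∈ D_n` and `r > s`, with `k_n(θ) = ⌊nθ⌋/n`,
`∫_s^r (r - k_n(θ))^(-1-ε) dθ ≤ N_ε * min(r-s, 1/n)^(-ε) + 1_{r ∉ D_n} (r - k_n(r))^(-ε)`. -/
theorem intkn_minus (ε : ℝ) (hε : 0 < ε) :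
    ∃ N : ℝ, 0 < N ∧ ∀ (n : ℕ), 0 < n → ∀ (i : ℕ), i ≤ n → ∀ r : ℝ,
      (i:ℝ)/n < r →
      (∫ θ in ((i:ℝ)/n)..r, (r - (⌊(n:ℝ) * θ⌋ : ℝ)/n) ^ (-1 - ε))
        ≤ N * (min (r - (i:ℝ)/n) (1/n)) ^ (-ε)
          + (if ∃ j : ℕ, j ≤ n ∧ r = (j:ℝ)/n then 0
             else (r - (⌊(n:ℝ) * r⌋ : ℝ)/n) ^ (-ε)) := by
  have hsum : Summable (fun j : ℕ => (j:ℝ) ^ (-1-ε)) :=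
    Real.summable_nat_rpow.mpr (by linarith)
  set C : ℝ := ∑' j : ℕ, (j:ℝ) ^ (-1-ε) with hC
  have hC0 : 0 ≤ C := tsum_nonneg fun j => Real.rpow_nonneg (Nat.cast_nonneg j) _
  refine ⟨C + 1, by linarith, ?_⟩
  intro n hn i hi r hr
  have hn' : (0:ℝ) < n := by exact_mod_cast hn
  have hi0 : (0:ℝ) ≤ (i:ℝ)/n := by positivity
  have hr0 : 0 < (n:ℝ) * r := lt_of_le_of_lt (by positivity)
    ((mul_lt_mul_iff_right₀ hn').mpr hr) |>.trans_le (le_of_eq (by field_simp))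
  -- m = floor(n r) as a natural number
  set m : ℕ := (⌊(n:ℝ)*r⌋).toNat with hm
  have hfl0 : (0:ℤ) ≤ ⌊(n:ℝ)*r⌋ := Int.floor_nonneg.mpr hr0.le
  have hmZ : ((m:ℕ):ℤ) = ⌊(n:ℝ)*r⌋ := by rw [hm]; exact Int.toNat_of_nonneg hfl0
  have hmcast : ((m:ℕ):ℝ) = ((⌊(n:ℝ)*r⌋:ℤ):ℝ) := by exact_mod_cast hmZ
  have hir : (i:ℝ) < (n:ℝ)*r := by
    have := (mul_lt_mul_iff_right₀ hn').mpr hr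
    rwa [mul_div_cancel₀ _ hn'.ne'] at this
  have hmi : i ≤ m := by
    have h1 : (i:ℤ) ≤ ⌊(n:ℝ)*r⌋ := Int.le_floor.mpr (by exact_mod_cast hir.le)
    omega
  have hml : (m:ℝ) ≤ (n:ℝ)*r := by rw [hmcast]; exact Int.floor_le _
  have hmu : (n:ℝ)*r < (m:ℝ)+1 := by rw [hmcast]; exact Int.lt_floor_add_one _
  set d : ℕ := m - i with hd
  have hdc : (i:ℝ) + (d:ℝ) = (m:ℝ) := by
    rw [hd, Nat.cast_sub hmi]; ring
  have h1 : ((i:ℝ)+(d:ℝ))/n ≤ r := by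
    rw [hdc, div_le_iff₀ hn']; linarith
  have h2 : r ≤ ((i:ℝ)+(d:ℝ)+1)/n := by
    rw [hdc, le_div_iff₀ hn']; linarith
  obtain ⟨hint, heq⟩ := intkn_formula ε n hn r d i h1 h2
  rw [show (-1 - ε) = (-1-ε) from rfl, heq]
  -- bound the sum
  have hmin : 0 < min (r - (i:ℝ)/n) (1/(n:ℝ)) := by
    apply lt_min (by linarith) (by positivity)
  have hminpow : 0 < (min (r - (i:ℝ)/n) (1/(n:ℝ))) ^ (-ε) := Real.rpow_pos_of_pos hmin _
  have hterm : ∀ k ∈ Finset.range d,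
      (1/(n:ℝ)) * (r - ((i:ℝ)+(k:ℝ))/n) ^ (-1-ε)
        ≤ (((d-k:ℕ):ℝ))^(-1-ε) * (n:ℝ)^ε := by
    intro k hk
    have hkd : k < d := Finset.mem_range.mp hk
    have hdk : ((d-k:ℕ):ℝ) = (d:ℝ) - (k:ℝ) := by
      rw [Nat.cast_sub hkd.le]
    have hpos : (0:ℝ) < ((d-k:ℕ):ℝ)/n := by
      rw [hdk]
      have hkd' : (k:ℝ) < (d:ℝ) := by exact_mod_cast hkd
      apply div_pos (by linarith) hn'
    have hle : ((d-k:ℕ):ℝ)/n ≤ r - ((i:ℝ)+(k:ℝ))/n := by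
      rw [hdk, div_le_iff₀ hn']
      have := h1
      rw [div_le_iff₀ hn'] at this
      have hexp : (r - ((i:ℝ)+(k:ℝ))/n) * n = r*n - ((i:ℝ)+(k:ℝ)) := by
        field_simp
      rw [hexp]; linarith
    have hb := Real.rpow_le_rpow_of_nonpos hpos hle (by linarith : (-1-ε) ≤ 0)
    have heq2 : (1/(n:ℝ)) * (((d-k:ℕ):ℝ)/n) ^ (-1-ε) = (((d-k:ℕ):ℝ))^(-1-ε) * (n:ℝ)^ε := by
      rw [Real.div_rpow (Nat.cast_nonneg _) hn'.le]
      have e1 : ((d-k:ℕ):ℝ)^(-1-ε) / (n:ℝ)^(-1-ε) = ((d-k:ℕ):ℝ)^(-1-ε) * (n:ℝ)^(1+ε) := by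
        rw [div_eq_mul_inv, ← Real.rpow_neg hn'.le, show -(-1-ε) = 1+ε by ring]
      rw [e1]
      have e2 : (n:ℝ)^(1+ε) = (n:ℝ) * (n:ℝ)^ε := by
        rw [Real.rpow_add hn', Real.rpow_one]
      rw [e2]
      field_simp
    calc (1/(n:ℝ)) * (r - ((i:ℝ)+(k:ℝ))/n) ^ (-1-ε)
        ≤ (1/(n:ℝ)) * (((d-k:ℕ):ℝ)/n) ^ (-1-ε) := by
          apply mul_le_mul_of_nonneg_left hb (by positivity)
      _ = (((d-k:ℕ):ℝ))^(-1-ε) * (n:ℝ)^ε := heq2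
  have hS : (∑ k ∈ Finset.range d, (1/(n:ℝ)) * (r - ((i:ℝ)+(k:ℝ))/n) ^ (-1-ε))
      ≤ C * (n:ℝ)^ε := by
    calc (∑ k ∈ Finset.range d, (1/(n:ℝ)) * (r - ((i:ℝ)+(k:ℝ))/n) ^ (-1-ε))
        ≤ ∑ k ∈ Finset.range d, (((d-k:ℕ):ℝ))^(-1-ε) * (n:ℝ)^ε :=
          Finset.sum_le_sum hterm
      _ = (∑ k ∈ Finset.range d, (((d-k:ℕ):ℝ))^(-1-ε)) * (n:ℝ)^ε := by
          rw [Finset.sum_mul]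
      _ ≤ C * (n:ℝ)^ε := by
          apply mul_le_mul_of_nonneg_right ?_ (Real.rpow_nonneg hn'.le _)
          have hrefl : (∑ k ∈ Finset.range d, (((d-k:ℕ):ℝ))^(-1-ε))
              = ∑ j ∈ Finset.range d, (((j+1:ℕ):ℝ))^(-1-ε) := by
            rw [← Finset.sum_range_reflect (fun j => (((j+1:ℕ):ℝ))^(-1-ε)) d]
            apply Finset.sum_congr rfl
            intro k hk
            have hkd : k < d := Finset.mem_range.mp hk
            congr 2
            omega
          rw [hrefl]
          have h0 : ((0:ℕ):ℝ)^(-1-ε) = 0 := by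
            simp [Real.zero_rpow (by linarith : (-1-ε) ≠ 0)]
          have := Finset.sum_range_succ' (fun j : ℕ => ((j:ℕ):ℝ)^(-1-ε)) d
          have hsum2 : (∑ j ∈ Finset.range d, (((j+1:ℕ):ℝ))^(-1-ε))
              = ∑ j ∈ Finset.range (d+1), ((j:ℝ))^(-1-ε) := by
            rw [this, h0, add_zero]
          rw [hsum2]
          exact Summable.sum_le_tsum _ (fun j _ => Real.rpow_nonneg (Nat.cast_nonneg j) _) hsum
  have hnpow : (n:ℝ)^ε = (1/(n:ℝ))^(-ε) := by
    rw [one_div, Real.inv_rpow hn'.le, ← Real.rpow_neg hn'.le, neg_neg]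
  have hmono : (1/(n:ℝ))^(-ε) ≤ (min (r - (i:ℝ)/n) (1/(n:ℝ)))^(-ε) :=
    Real.rpow_le_rpow_of_nonpos hmin (min_le_right _ _) (by linarith)
  have hS2 : (∑ k ∈ Finset.range d, (1/(n:ℝ)) * (r - ((i:ℝ)+(k:ℝ))/n) ^ (-1-ε))
      ≤ (C+1) * (min (r - (i:ℝ)/n) (1/(n:ℝ)))^(-ε) := by
    calc _ ≤ C * (n:ℝ)^ε := hS
      _ = C * (1/(n:ℝ))^(-ε) := by rw [hnpow]
      _ ≤ C * (min (r - (i:ℝ)/n) (1/(n:ℝ)))^(-ε) :=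
          mul_le_mul_of_nonneg_left hmono hC0
      _ ≤ (C+1) * (min (r - (i:ℝ)/n) (1/(n:ℝ)))^(-ε) := by
          apply mul_le_mul_of_nonneg_right (by linarith) hminpow.le
  -- last term
  set x : ℝ := r - ((i:ℝ)+(d:ℝ))/n with hx
  have hx0 : 0 ≤ x := by
    rw [hx, hdc]; rw [sub_nonneg, div_le_iff₀ hn']; linarith
  have hT : x * x ^ (-1-ε) = x ^ (-ε) := by
    rcases eq_or_lt_of_le hx0 with h|h
    · rw [← h, Real.zero_rpow (by linarith : (-ε) ≠ 0), zero_mul]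
    · nth_rewrite 1 [← Real.rpow_one x]
      rw [← Real.rpow_add h]
      congr 1; ring
  have hTle : x * x ^ (-1-ε)
      ≤ (if ∃ j : ℕ, j ≤ n ∧ r = (j:ℝ)/n then 0
         else (r - (⌊(n:ℝ) * r⌋ : ℝ)/n) ^ (-ε)) := by
    by_cases hD : ∃ j : ℕ, j ≤ n ∧ r = (j:ℝ)/n
    · rw [if_pos hD]
      obtain ⟨j, hj, rfl⟩ := hD
      have : (n:ℝ) * ((j:ℝ)/n) = (j:ℝ) := by field_simp
      have hfj : ⌊(n:ℝ) * ((j:ℝ)/n)⌋ = (j:ℤ) := by rw [this]; exact Int.floor_natCast j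
      have hxz : x = 0 := by
        rw [hx, hdc, hm, this, Int.floor_natCast, Int.toNat_natCast]
        simp
      rw [hxz, Real.zero_rpow (by linarith : (-1-ε) ≠ 0), zero_mul]
    · rw [if_neg hD, hT]
      have : x = r - (⌊(n:ℝ) * r⌋ : ℝ)/n := by rw [hx, hdc, hmcast]
      rw [this]
  calc _ ≤ (C+1) * (min (r - (i:ℝ)/n) (1/(n:ℝ)))^(-ε)
        + (if ∃ j : ℕ, j ≤ n ∧ r = (j:ℝ)/n then 0
           else (r - (⌊(n:ℝ) * r⌋ : ℝ)/n) ^ (-ε)) := add_le_add hS2 hTle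
    _ = _ := by norm_num
end

section
/- Let $\xi:[0,\infty)\to[0,\infty)$ be nondecreasing, $A:[0,\infty)\to[0,\infty)$ continuous nondecreasing with $A_0=0$, and $\theta>1$. Then for all $t\ge0$, $\big(\int_0^t \xi_s^{1/\theta}\,dA_s\big)^{\theta}\le \int_0^t \xi_s\,dA_s^{\theta}=\int_0^t \xi_s\,\theta A_s^{\theta-1}\,dA_s$. -/
open MeasureTheory Set
open scoped ENNReal

lemma hsp_rpow_aux {θ : ℝ} (hθ : 1 < θ) {x : ℝ} (hx : 0 ≤ x) :
    ENNReal.ofReal (θ * x ^ (θ - 1)) =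
      ∫⁻ r in Set.Ioc (0:ℝ) x, ENNReal.ofReal (θ * (θ - 1) * r ^ (θ - 2)) := by
  have hθ1 : θ - 1 ≠ 0 := by linarith
  have hint : IntegrableOn (fun r : ℝ => θ * (θ - 1) * r ^ (θ - 2)) (Set.Ioc 0 x) := by
    have := (intervalIntegral.intervalIntegrable_rpow' (a := 0) (b := x)
      (by linarith : (-1:ℝ) < θ - 2)).const_mul (θ * (θ - 1))
    rwa [intervalIntegrable_iff_integrableOn_Ioc_of_le hx] at this
  have hnn : 0 ≤ᵐ[volume.restrict (Set.Ioc (0:ℝ) x)]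
      fun r : ℝ => θ * (θ - 1) * r ^ (θ - 2) := by
    filter_upwards [ae_restrict_mem measurableSet_Ioc] with r hr
    have : (0:ℝ) ≤ r ^ (θ - 2) := Real.rpow_nonneg hr.1.le _
    exact mul_nonneg (by nlinarith : (0:ℝ) ≤ θ * (θ - 1)) this
  rw [← ofReal_integral_eq_lintegral_ofReal hint hnn]
  congr 1
  rw [← intervalIntegral.integral_of_le hx, intervalIntegral.integral_const_mul,
    integral_rpow (Or.inl (by linarith : (-1:ℝ) < θ - 2))]
  rw [Real.zero_rpow (by intro h; apply hθ1; linarith [h] : θ - 2 + 1 ≠ 0)]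
  have h21 : θ - 2 + 1 = θ - 1 := by ring
  rw [h21]
  field_simp
  ring

lemma hsp_meas_aux (A : StieltjesFunction ℝ) (hAcont : Continuous A) (hA0 : A 0 = 0)
    {t r : ℝ} (hr : 0 ≤ r) :
    ENNReal.ofReal (A t - r) ≤ A.measure ({s | r ≤ A s} ∩ Set.Ioc 0 t) := by
  set E : Set ℝ := {s | s ∈ Set.Ioc (0:ℝ) t ∧ A s < r} with hE
  have hEmeas : MeasurableSet E := by
    have : E = Set.Ioc (0:ℝ) t ∩ (⇑A) ⁻¹' Set.Iio r := rfl
    rw [this]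
    exact measurableSet_Ioc.inter (hAcont.measurable measurableSet_Iio)
  have hEsub : E ⊆ Set.Ioc 0 t := fun s hs => hs.1
  have hEle : A.measure E ≤ ENNReal.ofReal r := by
    rcases E.eq_empty_or_nonempty with h | hne
    · simp [h]
    · have hbdd : BddAbove E := ⟨t, fun s hs => hs.1.2⟩
      have hsub2 : E ⊆ Set.Ioc 0 (sSup E) := fun s hs => ⟨hs.1.1, le_csSup hbdd hs⟩
      calc A.measure E ≤ A.measure (Set.Ioc 0 (sSup E)) := measure_mono hsub2
        _ = ENNReal.ofReal (A (sSup E) - A 0) := A.measure_Ioc 0 _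
        _ ≤ ENNReal.ofReal r := by
            apply ENNReal.ofReal_le_ofReal
            rw [hA0, sub_zero]
            rw [Monotone.map_csSup_of_continuousAt hAcont.continuousAt A.mono hne hbdd]
            exact csSup_le (hne.image _) (by rintro y ⟨s, hs, rfl⟩; exact hs.2.le)
  have hEfin : A.measure E ≠ ⊤ := (hEle.trans_lt ENNReal.ofReal_lt_top).ne
  have hset : {s | r ≤ A s} ∩ Set.Ioc 0 t = Set.Ioc 0 t \ E := by
    ext s
    constructor
    · rintro ⟨h1, h2⟩; exact ⟨h2, fun hc => absurd h1 (not_le.2 hc.2)⟩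
    · rintro ⟨h1, h2⟩
      refine ⟨?_, h1⟩
      by_contra hlt
      exact h2 ⟨h1, not_le.1 hlt⟩
  rw [hset, measure_diff hEsub hEmeas.nullMeasurableSet hEfin, A.measure_Ioc, hA0, sub_zero]
  calc ENNReal.ofReal (A t - r) = ENNReal.ofReal (A t) - ENNReal.ofReal r :=
        ENNReal.ofReal_sub _ hr
    _ ≤ ENNReal.ofReal (A t) - A.measure E := tsub_le_tsub_left hEle _

lemma hsp_key_aux (A : StieltjesFunction ℝ) (hAcont : Continuous A) (hA0 : A 0 = 0)
    {θ : ℝ} (hθ : 1 < θ) {t : ℝ} (ht : 0 ≤ t) :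
    ENNReal.ofReal (A t ^ θ)
      ≤ ∫⁻ s in Set.Ioc (0:ℝ) t, ENNReal.ofReal (θ * A s ^ (θ - 1)) ∂A.measure := by
  have hθ0 : (0:ℝ) < θ := by linarith
  have hθ1 : (0:ℝ) < θ - 1 := by linarith
  have hAt : 0 ≤ A t := hA0 ▸ A.mono ht
  have hAmeas : Measurable A := hAcont.measurable
  set c : ℝ → ℝ≥0∞ := fun r => ENNReal.ofReal (θ * (θ - 1) * r ^ (θ - 2)) with hc
  have hcm : Measurable c := by
    apply ENNReal.measurable_ofReal.comp
    exact (measurable_id.pow measurable_const).const_mul _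
  rcases eq_or_lt_of_le hAt with h0 | hX
  · rw [← h0, Real.zero_rpow hθ0.ne', ENNReal.ofReal_zero]
    exact zero_le
  -- swap
  have hswap : ∫⁻ s in Set.Ioc (0:ℝ) t, ENNReal.ofReal (θ * A s ^ (θ - 1)) ∂A.measure
      = ∫⁻ r in Set.Ioi (0:ℝ), c r * A.measure ({s | r ≤ A s} ∩ Set.Ioc 0 t) ∂volume := by
    have hFmeas : Measurable (Function.uncurry fun (s r : ℝ) => if r ≤ A s then c r else 0) := by
      apply Measurable.ite _ (hcm.comp measurable_snd) measurable_const
      exact measurableSet_le measurable_snd (hAmeas.comp measurable_fst)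
    have h1 : ∫⁻ s in Set.Ioc (0:ℝ) t, ENNReal.ofReal (θ * A s ^ (θ - 1)) ∂A.measure
        = ∫⁻ s in Set.Ioc (0:ℝ) t, ∫⁻ r in Set.Ioi (0:ℝ),
            (if r ≤ A s then c r else 0) ∂volume ∂A.measure := by
      refine setLIntegral_congr_fun measurableSet_Ioc (fun s hs => ?_)
      have hAs : 0 ≤ A s := hA0 ▸ A.mono hs.1.le
      have hind : (fun r : ℝ => if r ≤ A s then c r else 0)
          = (Set.Iic (A s)).indicator c := by
        funext r; rw [Set.indicator_apply]; rfl
      rw [hind, lintegral_indicator measurableSet_Iic,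
        Measure.restrict_restrict measurableSet_Iic, Set.Iic_inter_Ioi,
        hsp_rpow_aux hθ hAs]
    have h2 : ∀ r : ℝ, ∫⁻ s in Set.Ioc (0:ℝ) t, (if r ≤ A s then c r else 0) ∂A.measure
        = c r * A.measure ({s | r ≤ A s} ∩ Set.Ioc 0 t) := by
      intro r
      have hind : (fun s : ℝ => if r ≤ A s then c r else 0)
          = ({s | r ≤ A s}).indicator (fun _ => c r) := by
        funext s; rw [Set.indicator_apply]; rfl
      have hms : MeasurableSet {s | r ≤ A s} := hAmeas measurableSet_Ici
      rw [hind, lintegral_indicator_const hms, Measure.restrict_apply hms]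
    rw [h1, lintegral_lintegral_swap (hFmeas.aemeasurable)]
    exact lintegral_congr fun r => h2 r
  rw [hswap]
  set X := A t with hXdef
  -- lower bound
  have hgint : IntegrableOn
      (fun r : ℝ => θ * (θ - 1) * X * r ^ (θ - 2) - θ * (θ - 1) * r ^ (θ - 1))
      (Set.Ioc 0 X) := by
    have h1 := (intervalIntegral.intervalIntegrable_rpow' (a := 0) (b := X)
      (by linarith : (-1:ℝ) < θ - 2)).const_mul (θ * (θ - 1) * X)
    have h2 := (intervalIntegral.intervalIntegrable_rpow' (a := 0) (b := X)
      (by linarith : (-1:ℝ) < θ - 1)).const_mul (θ * (θ - 1))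
    have := h1.sub h2
    rwa [intervalIntegrable_iff_integrableOn_Ioc_of_le hX.le] at this
  have hgeq : Set.EqOn (fun r : ℝ => θ * (θ - 1) * X * r ^ (θ - 2) - θ * (θ - 1) * r ^ (θ - 1))
      (fun r : ℝ => θ * (θ - 1) * r ^ (θ - 2) * (X - r)) (Set.Ioc 0 X) := by
    intro r hr
    have hrpow : r ^ (θ - 1) = r ^ (θ - 2) * r := by
      rw [show θ - 1 = θ - 2 + 1 by ring, Real.rpow_add_one hr.1.ne']
    simp only
    rw [hrpow]; ring
  have hgint2 : IntegrableOn (fun r : ℝ => θ * (θ - 1) * r ^ (θ - 2) * (X - r))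
      (Set.Ioc 0 X) := hgint.congr_fun hgeq measurableSet_Ioc
  have hgnn : 0 ≤ᵐ[volume.restrict (Set.Ioc (0:ℝ) X)]
      fun r : ℝ => θ * (θ - 1) * r ^ (θ - 2) * (X - r) := by
    filter_upwards [ae_restrict_mem measurableSet_Ioc] with r hr
    have h1 : (0:ℝ) ≤ r ^ (θ - 2) := Real.rpow_nonneg hr.1.le _
    have h2 : (0:ℝ) ≤ X - r := by linarith [hr.2]
    have h3 : (0:ℝ) ≤ θ * (θ - 1) := by nlinarith
    positivity
  have hval : ∫ r in Set.Ioc (0:ℝ) X, θ * (θ - 1) * r ^ (θ - 2) * (X - r) = X ^ θ := by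
    rw [setIntegral_congr_fun measurableSet_Ioc hgeq.symm]
    rw [← intervalIntegral.integral_of_le hX.le]
    have i1 : IntervalIntegrable (fun r : ℝ => θ * (θ - 1) * X * r ^ (θ - 2)) volume 0 X :=
      (intervalIntegral.intervalIntegrable_rpow' (by linarith : (-1:ℝ) < θ - 2)).const_mul _
    have i2 : IntervalIntegrable (fun r : ℝ => θ * (θ - 1) * r ^ (θ - 1)) volume 0 X :=
      (intervalIntegral.intervalIntegrable_rpow' (by linarith : (-1:ℝ) < θ - 1)).const_mul _
    rw [intervalIntegral.integral_sub i1 i2, intervalIntegral.integral_const_mul,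
      intervalIntegral.integral_const_mul,
      integral_rpow (Or.inl (by linarith : (-1:ℝ) < θ - 2)),
      integral_rpow (Or.inl (by linarith : (-1:ℝ) < θ - 1))]
    rw [show θ - 2 + 1 = θ - 1 by ring, show θ - 1 + 1 = θ by ring,
      Real.zero_rpow (by linarith : θ - 1 ≠ 0), Real.zero_rpow (by linarith : θ ≠ 0)]
    have hXpow : X ^ (θ - 1) * X = X ^ θ := by
      rw [← Real.rpow_add_one hX.ne' (θ - 1), sub_add_cancel]
    field_simp
    linear_combination θ * hXpow
  calc ENNReal.ofReal (X ^ θ)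
      = ∫⁻ r in Set.Ioc (0:ℝ) X, ENNReal.ofReal (θ * (θ - 1) * r ^ (θ - 2) * (X - r)) := by
        rw [← ofReal_integral_eq_lintegral_ofReal hgint2 hgnn, hval]
    _ ≤ ∫⁻ r in Set.Ioc (0:ℝ) X, c r * A.measure ({s | r ≤ A s} ∩ Set.Ioc 0 t) := by
        refine setLIntegral_mono' measurableSet_Ioc fun r hr => ?_
        have h3 : (0:ℝ) ≤ θ * (θ - 1) * r ^ (θ - 2) := by
          exact mul_nonneg (by nlinarith : (0:ℝ) ≤ θ * (θ - 1)) (Real.rpow_nonneg hr.1.le _)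
        rw [ENNReal.ofReal_mul h3]
        exact mul_le_mul_right (hsp_meas_aux A hAcont hA0 hr.1.le) _
    _ ≤ ∫⁻ r in Set.Ioi (0:ℝ), c r * A.measure ({s | r ≤ A s} ∩ Set.Ioc 0 t) ∂volume :=
        lintegral_mono_set Set.Ioc_subset_Ioi_self

/-- For `ξ` nonnegative nondecreasing, `A` a continuous nondecreasing function with
`A 0 = 0` (a Stieltjes function) and `θ > 1`, for all `t ≥ 0`:
`(∫_0^t ξ_s^{1/θ} dA_s)^θ ≤ ∫_0^t ξ_s θ A_s^{θ-1} dA_s`. -/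
theorem holder_stieltjes_power (A : StieltjesFunction ℝ) (hAcont : Continuous A)
    (hA0 : A 0 = 0) (ξ : ℝ → ℝ) (hξ0 : ∀ s, 0 ≤ ξ s) (hξmono : Monotone ξ)
    (θ : ℝ) (hθ : 1 < θ) (t : ℝ) (ht : 0 ≤ t) :
    (∫ s in Set.Ioc (0:ℝ) t, (ξ s) ^ (1/θ) ∂A.measure) ^ θ
      ≤ ∫ s in Set.Ioc (0:ℝ) t, ξ s * (θ * (A s) ^ (θ - 1)) ∂A.measure := by
  have hθ0 : (0:ℝ) < θ := by linarith
  have hθ1 : (0:ℝ) < θ - 1 := by linarith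
  have hAt : 0 ≤ A t := hA0 ▸ A.mono ht
  have hAmeas : Measurable A := hAcont.measurable
  have hξmeas : Measurable ξ := hξmono.measurable
  have hξθmono : Monotone fun s => ξ s ^ (1/θ) := fun a b hab =>
    Real.rpow_le_rpow (hξ0 a) (hξmono hab) (one_div_nonneg.2 hθ0.le)
  have hξθmeas : Measurable fun s => ξ s ^ (1/θ) := hξθmono.measurable
  set μ := A.measure with hμ
  set S := Set.Ioc (0:ℝ) t with hSdef
  have hSm : MeasurableSet S := measurableSet_Ioc
  have hμS : μ S = ENNReal.ofReal (A t) := by rw [hμ, A.measure_Ioc, hA0, sub_zero]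
  rcases eq_or_lt_of_le hAt with h0 | hX
  · have hz : μ.restrict S = 0 := by
      rw [Measure.restrict_eq_zero, hμS, ← h0, ENNReal.ofReal_zero]
    simp [hz, Real.zero_rpow hθ0.ne']
  -- nonneg and ae-measurability conversions
  set J1 := ∫⁻ s in S, ENNReal.ofReal (ξ s) ^ (1/θ) ∂μ with hJ1
  set J2 := ∫⁻ s in S, ENNReal.ofReal (ξ s) ∂μ with hJ2
  have hI1 : ∫ s in S, ξ s ^ (1/θ) ∂μ = J1.toReal := by
    rw [integral_eq_lintegral_of_nonneg_ae
      (ae_of_all _ fun s => Real.rpow_nonneg (hξ0 s) _)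
      hξθmeas.aestronglyMeasurable]
    congr 1
    exact lintegral_congr fun s => (ENNReal.ofReal_rpow_of_nonneg (hξ0 s) (one_div_nonneg.2 hθ0.le)).symm
  have hI2 : ∫ s in S, ξ s ∂μ = J2.toReal := by
    rw [integral_eq_lintegral_of_nonneg_ae (ae_of_all _ hξ0) hξmeas.aestronglyMeasurable]
  have hJ2fin : J2 ≠ ⊤ := by
    have hb : J2 ≤ ENNReal.ofReal (ξ t) * μ S := by
      rw [hJ2, ← setLIntegral_const S (ENNReal.ofReal (ξ t))]
      exact setLIntegral_mono' hSm fun s hs => ENNReal.ofReal_le_ofReal (hξmono hs.2)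
    refine (hb.trans_lt ?_).ne
    rw [hμS]
    exact ENNReal.mul_lt_top ENNReal.ofReal_lt_top ENNReal.ofReal_lt_top
  -- Hölder
  have hpq : θ.HolderConjugate (θ/(θ-1)) := Real.HolderConjugate.conjExponent hθ
  have hHolder : J1 ≤ J2 ^ (1/θ) * (μ S) ^ ((θ-1)/θ) := by
    have hf : AEMeasurable (fun s => ENNReal.ofReal (ξ s) ^ (1/θ)) (μ.restrict S) :=
      ((ENNReal.measurable_ofReal.comp hξmeas).pow measurable_const).aemeasurable
    have := ENNReal.lintegral_mul_le_Lp_mul_Lq (μ.restrict S) hpq hf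
      (aemeasurable_const (b := (1:ℝ≥0∞)))
    simp only [Pi.mul_apply, mul_one, ENNReal.one_rpow] at this
    calc J1 ≤ (∫⁻ s in S, (ENNReal.ofReal (ξ s) ^ (1/θ)) ^ θ ∂μ) ^ (1/θ)
        * (∫⁻ _ in S, (1:ℝ≥0∞) ∂μ) ^ (1/(θ/(θ-1))) := this
      _ = J2 ^ (1/θ) * (μ S) ^ ((θ-1)/θ) := by
          congr 1
          · congr 1
            refine lintegral_congr fun s => ?_
            rw [← ENNReal.rpow_mul, one_div_mul_cancel hθ0.ne', ENNReal.rpow_one]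
          · rw [lintegral_const, Measure.restrict_apply MeasurableSet.univ, Set.univ_inter]
            rw [one_mul, one_div_div]
  have hkey : J1 ^ θ ≤ J2 * ENNReal.ofReal (A t) ^ (θ - 1) := by
    calc J1 ^ θ ≤ (J2 ^ (1/θ) * (μ S) ^ ((θ-1)/θ)) ^ θ :=
          ENNReal.rpow_le_rpow hHolder hθ0.le
      _ = J2 * ENNReal.ofReal (A t) ^ (θ - 1) := by
          rw [ENNReal.mul_rpow_of_nonneg _ _ hθ0.le, ← ENNReal.rpow_mul, ← ENNReal.rpow_mul,
            one_div_mul_cancel hθ0.ne', ENNReal.rpow_one, hμS]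
          congr 2
          field_simp
  -- integrability on S
  haveI : IsFiniteMeasure (μ.restrict S) := ⟨by
    rw [Measure.restrict_apply_univ, hμS]; exact ENNReal.ofReal_lt_top⟩
  have hμSfin : μ S ≠ ⊤ := by rw [hμS]; exact ENNReal.ofReal_ne_top
  have hApow_bound : ∀ s ∈ S, (0:ℝ) ≤ A s ∧ θ * A s ^ (θ-1) ≤ θ * A t ^ (θ-1) := by
    intro s hs
    have h1 : (0:ℝ) ≤ A s := hA0 ▸ A.mono hs.1.le
    exact ⟨h1, mul_le_mul_of_nonneg_left
      (Real.rpow_le_rpow h1 (A.mono hs.2) hθ1.le) hθ0.le⟩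
  have hintξθA : IntegrableOn (fun s => ξ s * (θ * A s ^ (θ-1))) S μ := by
    refine Measure.integrableOn_of_bounded hμSfin
      ((hξmeas.mul ((hAmeas.pow measurable_const).const_mul θ)).aestronglyMeasurable)
      (M := ξ t * (θ * A t ^ (θ-1))) ?_
    filter_upwards [ae_restrict_mem hSm] with s hs
    obtain ⟨h1, h2⟩ := hApow_bound s hs
    rw [Real.norm_eq_abs, abs_of_nonneg (mul_nonneg (hξ0 s)
      (mul_nonneg hθ0.le (Real.rpow_nonneg h1 _)))]
    have := hξmono hs.2
    have h3 : (0:ℝ) ≤ θ * A s ^ (θ-1) := by positivity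
    nlinarith [hξ0 s, hξ0 t]
  have hintθA : IntegrableOn (fun s => θ * A s ^ (θ-1)) S μ := by
    refine Measure.integrableOn_of_bounded hμSfin
      ((hAmeas.pow measurable_const).const_mul θ).aestronglyMeasurable
      (M := θ * A t ^ (θ-1)) ?_
    filter_upwards [ae_restrict_mem hSm] with s hs
    obtain ⟨h1, h2⟩ := hApow_bound s hs
    rw [Real.norm_eq_abs, abs_of_nonneg (mul_nonneg hθ0.le (Real.rpow_nonneg h1 _))]
    exact h2
  have hintξ : IntegrableOn ξ S μ := by
    refine Measure.integrableOn_of_bounded hμSfin hξmeas.aestronglyMeasurable (M := ξ t) ?_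
    filter_upwards [ae_restrict_mem hSm] with s hs
    rw [Real.norm_eq_abs, abs_of_nonneg (hξ0 s)]
    exact hξmono hs.2
  -- pick s0
  obtain ⟨s0, hs0mem, hs0⟩ : ∃ s0 ∈ Set.Icc (0:ℝ) t, θ * A s0 ^ (θ-1) = A t ^ (θ-1) := by
    have hcont : ContinuousOn (fun s => θ * A s ^ (θ-1)) (Set.Icc 0 t) :=
      continuousOn_const.mul (hAcont.continuousOn.rpow_const fun x _ => Or.inr hθ1.le)
    have hmem : A t ^ (θ-1) ∈ Set.Icc (θ * A 0 ^ (θ-1)) (θ * A t ^ (θ-1)) := by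
      constructor
      · rw [hA0, Real.zero_rpow hθ1.ne', mul_zero]
        positivity
      · have : (0:ℝ) ≤ A t ^ (θ-1) := Real.rpow_nonneg hAt _
        nlinarith
    obtain ⟨s0, hs0mem, hs0⟩ := intermediate_value_Icc ht hcont hmem
    exact ⟨s0, hs0mem, hs0⟩
  -- pointwise bound
  have hptwise : ∀ s ∈ S, ξ s * A t ^ (θ-1)
      ≤ ξ s * (θ * A s ^ (θ-1)) + ξ s0 * (A t ^ (θ-1) - θ * A s ^ (θ-1)) := by
    intro s hs
    have hAs : (0:ℝ) ≤ A s := (hApow_bound s hs).1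
    have hkey2 : (ξ s - ξ s0) * (A t ^ (θ-1) - θ * A s ^ (θ-1)) ≤ 0 := by
      rcases le_total s s0 with h | h
      · apply mul_nonpos_of_nonpos_of_nonneg
        · exact sub_nonpos.2 (hξmono h)
        · rw [sub_nonneg, ← hs0]
          exact mul_le_mul_of_nonneg_left (Real.rpow_le_rpow hAs (A.mono h) hθ1.le) hθ0.le
      · apply mul_nonpos_of_nonneg_of_nonpos
        · exact sub_nonneg.2 (hξmono h)
        · rw [sub_nonpos, ← hs0]
          have hAs0 : (0:ℝ) ≤ A s0 := hA0 ▸ A.mono hs0mem.1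
          exact mul_le_mul_of_nonneg_left (Real.rpow_le_rpow hAs0 (A.mono h) hθ1.le) hθ0.le
    nlinarith [hkey2]
  -- step 2
  have hstep2 : (∫ s in S, ξ s ∂μ) * A t ^ (θ-1)
      ≤ ∫ s in S, ξ s * (θ * A s ^ (θ-1)) ∂μ := by
    have hintc : IntegrableOn (fun _ : ℝ => A t ^ (θ-1)) S μ := integrableOn_const hμSfin
    have hint3 : IntegrableOn (fun s => ξ s0 * (A t ^ (θ-1) - θ * A s ^ (θ-1))) S μ :=
      (hintc.sub hintθA).const_mul _
    have hmono := setIntegral_mono_on (hintξ.mul_const _) (hintξθA.add hint3) hSm hptwise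
    rw [integral_mul_const] at hmono
    simp only [Pi.add_apply] at hmono
    rw [integral_add hintξθA hint3, integral_const_mul, integral_sub hintc hintθA,
      setIntegral_const, measureReal_def, hμS, ENNReal.toReal_ofReal hAt, smul_eq_mul] at hmono
    have hK : A t ^ θ ≤ ∫ s in S, θ * A s ^ (θ-1) ∂μ := by
      have h1 := hsp_key_aux A hAcont hA0 hθ ht
      rw [← ofReal_integral_eq_lintegral_ofReal hintθA
        (by filter_upwards [ae_restrict_mem hSm] with s hs;
            have := (hApow_bound s hs).1; positivity)] at h1
      exact (ENNReal.ofReal_le_ofReal_iff (setIntegral_nonneg hSm fun s hs => by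
        have := (hApow_bound s hs).1; positivity)).1 h1
    have hAtpow : A t ^ (θ-1) * A t = A t ^ θ := by
      rw [← Real.rpow_add_one hX.ne' (θ-1), sub_add_cancel]
    nlinarith [hξ0 s0, hmono, hK, hAtpow]
  -- assemble
  have hfin2 : J2 * ENNReal.ofReal (A t) ^ (θ-1) ≠ ⊤ :=
    ENNReal.mul_ne_top hJ2fin (ENNReal.rpow_ne_top_of_nonneg hθ1.le ENNReal.ofReal_ne_top)
  calc (∫ s in S, ξ s ^ (1/θ) ∂μ) ^ θ = (J1 ^ θ).toReal := by
        rw [hI1, ENNReal.toReal_rpow]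
    _ ≤ (J2 * ENNReal.ofReal (A t) ^ (θ-1)).toReal := ENNReal.toReal_mono hfin2 hkey
    _ = (∫ s in S, ξ s ∂μ) * A t ^ (θ-1) := by
        rw [ENNReal.toReal_mul, hI2, ← ENNReal.toReal_rpow, ENNReal.toReal_ofReal hAt]
    _ ≤ ∫ s in S, ξ s * (θ * A s ^ (θ-1)) ∂μ := hstep2
end
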